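/- Let R be an object unital G-graded ring, M and N graded unital left R-modules with N a graded submodule of M. Then N is a direct summand of M in the category of graded unital modules (with graded complement) if and only if the underlying module U(N) is a direct summand of U(M) as ungraded R-modules. -/

import Mathlib

open CategoryTheory

/-- The arrows of a groupoid, bundled with their endpoints. -/
abbrev GArrow (G : Type*) [Groupoid G] := Σ a b : G, a ⟶ b

namespace GArrow

variable {G : Type*} [Groupoid G]

/-- The unit arrow at an object. -/
def unit (a : G) : GArrow G := ⟨a, a, 𝟙 a⟩

/-- The inverse arrow `σ⁻¹`. -/
def ginv (σ : GArrow G) : GArrow G := ⟨σ.2.1, σ.1, Groupoid.inv σ.2.2⟩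

/-- `Composable σ τ` means `d(σ) = r(τ)`, i.e. the product `στ` is defined. -/
def Composable (σ τ : GArrow G) : Prop := σ.1 = τ.2.1

/-- The product `στ` when `d(σ) = r(τ)`. -/
def comp (σ τ : GArrow G) (h : Composable σ τ) : GArrow G :=
  ⟨τ.1, σ.2.1, τ.2.2 ≫ eqToHom h.symm ≫ σ.2.2⟩

/-- The unit space `G₀`, as a set of arrows. -/
def GUnits (G : Type*) [Groupoid G] : Set (GArrow G) := Set.range unit

/-- The product of two sets of arrows: `Σ * Σ' = { στ : σ ∈ Σ, τ ∈ Σ', d(σ) = r(τ) }`. -/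
def setMul (A B : Set (GArrow G)) : Set (GArrow G) :=
  {ρ | ∃ σ ∈ A, ∃ τ ∈ B, ∃ h : Composable σ τ, ρ = comp σ τ h}

end GArrow

/-- An object unital `G`-grading on an associative, not necessarily unital, ring `R`:
`R = ⊕_{σ ∈ G} R_σ`, `R_σ R_τ ⊆ R_{στ}` for composable pairs, `R_σ R_τ = 0` otherwise,
each `R_e` (`e ∈ G₀`) is unital with identity `u e`, and
`1_{R_{r(σ)}} r = r 1_{R_{d(σ)}} = r` for every `r ∈ R_σ`. -/
structure OUGrading (G : Type*) [Groupoid G] (R : Type*) [NonUnitalRing R] where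
  component : GArrow G → AddSubgroup R
  sup_eq_top : (⨆ σ : GArrow G, component σ) = ⊤
  indep : iSupIndep component
  mul_mem : ∀ (σ τ : GArrow G) (h : GArrow.Composable σ τ), ∀ r ∈ component σ,
    ∀ s ∈ component τ, r * s ∈ component (GArrow.comp σ τ h)
  mul_eq_zero : ∀ (σ τ : GArrow G), ¬ GArrow.Composable σ τ → ∀ r ∈ component σ,
    ∀ s ∈ component τ, r * s = 0
  /-- The identity of the unital ring `R_e`, for each object (unit) `e`. -/
  u : G → R
  u_mem : ∀ a : G, u a ∈ component (GArrow.unit a)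
  u_left : ∀ σ : GArrow G, ∀ r ∈ component σ, u σ.2.1 * r = r
  u_right : ∀ σ : GArrow G, ∀ r ∈ component σ, r * u σ.1 = r

/-- The axioms of a left module over a not necessarily unital ring. -/
structure NUModule (R M : Type*) [NonUnitalRing R] [AddCommGroup M] [SMul R M] : Prop where
  smul_add : ∀ (r : R) (m n : M), r • (m + n) = r • m + r • n
  add_smul : ∀ (r s : R) (m : M), (r + s) • m = r • m + s • m
  mul_smul : ∀ (r s : R) (m : M), (r * s) • m = r • (s • m)

/-- A `G`-graded left module over a ring `R` with object unital `G`-grading `gr`. -/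
structure GrModule {G : Type*} [Groupoid G] {R : Type*} [NonUnitalRing R]
    (gr : OUGrading G R) (M : Type*) [AddCommGroup M] [SMul R M] where
  smul_add : ∀ (r : R) (m n : M), r • (m + n) = r • m + r • n
  add_smul : ∀ (r s : R) (m : M), (r + s) • m = r • m + s • m
  mul_smul : ∀ (r s : R) (m : M), (r * s) • m = r • (s • m)
  component : GArrow G → AddSubgroup M
  sup_eq_top : (⨆ σ : GArrow G, component σ) = ⊤
  indep : iSupIndep component
  smul_mem : ∀ (σ τ : GArrow G) (h : GArrow.Composable σ τ), ∀ r ∈ gr.component σ,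
    ∀ m ∈ component τ, r • m ∈ component (GArrow.comp σ τ h)
  smul_eq_zero : ∀ (σ τ : GArrow G), ¬ GArrow.Composable σ τ → ∀ r ∈ gr.component σ,
    ∀ m ∈ component τ, r • m = 0

/-- A graded module is graded unital if `1_{R_{r(σ)}} • m = m` for all homogeneous `m`
of degree `σ`. -/
def GrModule.IsUnital {G : Type*} [Groupoid G] {R : Type*} [NonUnitalRing R]
    {gr : OUGrading G R} {M : Type*} [AddCommGroup M] [SMul R M]
    (gm : GrModule gr M) : Prop :=
  ∀ σ : GArrow G, ∀ m ∈ gm.component σ, gr.u σ.2.1 • m = m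

/-- A graded homomorphism between graded modules with homogeneous components `cM`, `cN`. -/
def IsGrHom {G : Type*} [Groupoid G] {R : Type*} [NonUnitalRing R]
    {M N : Type*} [AddCommGroup M] [AddCommGroup N] [SMul R M] [SMul R N]
    (cM : GArrow G → AddSubgroup M) (cN : GArrow G → AddSubgroup N) (f : M → N) : Prop :=
  (∀ x y : M, f (x + y) = f x + f y) ∧ (∀ (r : R) (x : M), f (r • x) = r • f x) ∧
    (∀ σ : GArrow G, ∀ x ∈ cM σ, f x ∈ cN σ)

/-- A graded submodule: an additive subgroup closed under the `R`-action which is the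
sum of its homogeneous components. -/
def IsGrSubmodule {G : Type*} [Groupoid G] {R : Type*} [NonUnitalRing R]
    {gr : OUGrading G R} {M : Type*} [AddCommGroup M] [SMul R M]
    (gm : GrModule gr M) (N : AddSubgroup M) : Prop :=
  (∀ (r : R), ∀ m ∈ N, r • m ∈ N) ∧ N = ⨆ σ : GArrow G, (N ⊓ gm.component σ)

open Classical in
/-- The homogeneous component of degree `τ` of the `σ'`-suspension `R(σ')`:
`R(σ')_τ = R_{τσ'}` if `(τ, σ')` is composable and `{0}` otherwise. -/
noncomputable def suspComponent {G : Type*} [Groupoid G] {R : Type*} [NonUnitalRing R]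
    (gr : OUGrading G R) (σ' τ : GArrow G) : AddSubgroup R :=
  if h : GArrow.Composable τ σ' then gr.component (GArrow.comp τ σ' h) else ⊥

/-- The `σ'`-suspension `R(σ') = ⊕_τ R(σ')_τ` of `R`, as an additive subgroup of `R`. -/
noncomputable def suspension {G : Type*} [Groupoid G] {R : Type*} [NonUnitalRing R]
    (gr : OUGrading G R) (σ' : GArrow G) : AddSubgroup R :=
  ⨆ τ : GArrow G, suspComponent gr σ' τ

/-- A graded homomorphism from a graded left ideal `S` of `R` (with homogeneous
components `cS`) to a graded module with components `cN`. -/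
def IsGrHomOn {G : Type*} [Groupoid G] {R N : Type*} [NonUnitalRing R]
    [AddCommGroup N] [SMul R N] {S : AddSubgroup R}
    (cS : GArrow G → AddSubgroup R) (cN : GArrow G → AddSubgroup N) (f : ↥S → N) : Prop :=
  (∀ x y : ↥S, f (x + y) = f x + f y) ∧
  (∀ (r : R) (x y : ↥S), (y : R) = r * (x : R) → f y = r • f x) ∧
  (∀ τ : GArrow G, ∀ x : ↥S, (x : R) ∈ cS τ → f x ∈ cN τ)

/-- A graded module is free by suspension if it is the internal direct sum of graded
submodules, each gradedly isomorphic to a suspension `R(σᵢ)` of `R`. -/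
noncomputable def FreeBySuspension {G : Type*} [Groupoid G] {R : Type*} [NonUnitalRing R]
    {gr : OUGrading G R} {M : Type*} [AddCommGroup M] [SMul R M]
    (gm : GrModule gr M) : Prop :=
  ∃ (ι : Type*) (σs : ι → GArrow G) (f : ∀ i : ι, ↥(suspension gr (σs i)) → M),
    (∀ i : ι, IsGrHomOn (suspComponent gr (σs i)) gm.component (f i)) ∧
    (∀ i : ι, Function.Injective (f i)) ∧
    iSupIndep (fun i : ι => AddSubgroup.closure (Set.range (f i))) ∧
    (⨆ i : ι, AddSubgroup.closure (Set.range (f i))) = ⊤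

/-- The set of graded homomorphisms `R → N` of degree `σ`. -/
def HomDeg {G : Type*} [Groupoid G] {R N : Type*} [NonUnitalRing R]
    [AddCommGroup N] [SMul R N] (gr : OUGrading G R)
    (cN : GArrow G → AddSubgroup N) (σ : GArrow G) : Set (R → N) :=
  {f | (∀ x y : R, f (x + y) = f x + f y) ∧ (∀ r x : R, f (r * x) = r • f x) ∧
    (∀ (τ : GArrow G) (h : GArrow.Composable τ σ), ∀ x ∈ gr.component τ,
        f x ∈ cN (GArrow.comp τ σ h)) ∧
    (∀ τ : GArrow G, ¬ GArrow.Composable τ σ → ∀ x ∈ gr.component τ, f x = 0)}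

/-- `HOM_R(R, N) = ⊕_σ HOM_R(R, N)_σ`, the additive group generated by the graded
homomorphisms of some degree. -/
def HOM {G : Type*} [Groupoid G] {R N : Type*} [NonUnitalRing R]
    [AddCommGroup N] [SMul R N] (gr : OUGrading G R)
    (cN : GArrow G → AddSubgroup N) : AddSubgroup (R → N) :=
  AddSubgroup.closure (⋃ σ : GArrow G, HomDeg gr cN σ)

/-- The left `R`-action `(r · f)(x) = f(x r)` on maps `R → N`. -/
def rAct {R N : Type*} [NonUnitalRing R] (r : R) (f : R → N) : R → N :=
  fun x => f (x * r)

/-- `R · HOM_R(R, N)`, the unitary part of `HOM_R(R, N)` under the action `rAct`. -/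
def RHOM {G : Type*} [Groupoid G] {R N : Type*} [NonUnitalRing R]
    [AddCommGroup N] [SMul R N] (gr : OUGrading G R)
    (cN : GArrow G → AddSubgroup N) : AddSubgroup (R → N) :=
  AddSubgroup.closure {g | ∃ (r : R), ∃ f ∈ HOM gr cN, g = rAct r f}

/-- A bundled graded unital left `R`-module. -/
structure GrUMod {G : Type*} [Groupoid G] {R : Type*} [NonUnitalRing R]
    (gr : OUGrading G R) where
  carrier : Type*
  [acg : AddCommGroup carrier]
  [sm : SMul R carrier]
  str : GrModule gr carrier
  unital : str.IsUnital

attribute [instance] GrUMod.acg GrUMod.sm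

/-!
The ungraded projection `p` of `M` onto `N` along an `R`-stable complement is `R`-linear but
need not respect the grading. Its block-diagonal part `q = ∑_σ π_σ ∘ p ∘ ι_σ` is still a
projection onto `N`, because `N` is graded, and still `R`-linear, because for `r ∈ R_ρ` the
action of `r` carries the `σ`-component to the `ρσ`-component and `ρσ = ρτ` forces `σ = τ`.
Hence `ker q` is a graded complement of `N`.
-/

open DirectSum

namespace DirectSum

variable {ι M : Type*} [DecidableEq ι] [AddCommGroup M] (ℳ : ι → AddSubgroup M)

theorem isInternal_addSubgroup_of_iSupIndep_of_iSup_eq_top (hind : iSupIndep ℳ)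
    (hsup : iSup ℳ = ⊤) : IsInternal ℳ :=
  isInternal_submodule_of_iSupIndep_of_iSup_eq_top (A := fun i => (ℳ i).toIntSubmodule)
    (hind.map_orderIso AddSubgroup.toIntSubmodule)
    (by rw [← AddSubgroup.toIntSubmodule.map_iSup, hsup]; rfl)

variable [Decomposition ℳ]

theorem isHomogeneous_iff_eq_iSup_inf (N : AddSubgroup M) :
    SetLike.IsHomogeneous ℳ N ↔ N = ⨆ i, N ⊓ ℳ i := by
  classical
  constructor
  · intro hN
    refine le_antisymm (fun m hm => ?_) (iSup_le fun i => inf_le_left)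
    rw [← sum_support_decompose ℳ m]
    exact sum_mem fun i _ => AddSubgroup.mem_iSup_of_mem i ⟨hN i hm, (decompose ℳ m i).2⟩
  · intro hN i m hm
    rw [hN] at hm
    refine AddSubgroup.iSup_induction _ hm (C := fun m => (decompose ℳ m i : M) ∈ N)
      (fun j x hx => ?_) (by simp) (fun x y hx hy => by simpa using add_mem hx hy)
    obtain rfl | hji := eq_or_ne j i
    · rw [decompose_of_mem_same ℳ hx.2]; exact hx.1
    · rw [decompose_of_mem_ne ℳ hx.2 hji]; exact zero_mem N

theorem coe_decompose_map {N : Type*} [AddCommGroup N] (𝒩 : ι → AddSubgroup N) [Decomposition 𝒩]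
    {f : M →+ N} (hf : ∀ i, ∀ x ∈ ℳ i, f x ∈ 𝒩 i) (m : M) (i : ι) :
    (decompose 𝒩 (f m) i : N) = f (decompose ℳ m i) := by
  induction m using Decomposition.inductionOn ℳ with
  | zero => simp
  | @homogeneous j x =>
    obtain ⟨x, hx⟩ := x
    obtain rfl | hji := eq_or_ne j i
    · rw [decompose_of_mem_same ℳ hx, decompose_of_mem_same 𝒩 (hf j x hx)]
    · rw [decompose_of_mem_ne ℳ hx hji, decompose_of_mem_ne 𝒩 (hf j x hx) hji, map_zero]
  | add x y hx hy => simp [hx, hy]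

/-- The block-diagonal part `∑ᵢ πᵢ ∘ p ∘ ιᵢ` of an additive endomorphism `p` of a graded group. -/
noncomputable def diagonalPart (p : M →+ M) : M →+ M :=
  (toAddMonoid fun i => ((ℳ i).subtype.comp ((DFinsupp.evalAddMonoidHom i).comp
      (decomposeAddEquiv ℳ).toAddMonoidHom)).comp (p.comp (ℳ i).subtype)).comp
    (decomposeAddEquiv ℳ).toAddMonoidHom

variable {ℳ}

theorem diagonalPart_apply_of_mem (p : M →+ M) {x : M} {i : ι} (hx : x ∈ ℳ i) :
    diagonalPart ℳ p x = decompose ℳ (p x) i := by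
  simp [diagonalPart, decompose_of_mem ℳ hx]
  rfl

theorem diagonalPart_mem (p : M →+ M) {x : M} {i : ι} (hx : x ∈ ℳ i) :
    diagonalPart ℳ p x ∈ ℳ i := by
  rw [diagonalPart_apply_of_mem p hx]
  exact (decompose ℳ (p x) i).2

variable {N : AddSubgroup M} {p : M →+ M}

theorem diagonalPart_mem_of_forall_mem (hN : SetLike.IsHomogeneous ℳ N) (hp : ∀ m, p m ∈ N)
    (m : M) : diagonalPart ℳ p m ∈ N := by
  induction m using Decomposition.inductionOn ℳ with
  | zero => simp
  | homogeneous x =>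
    rw [diagonalPart_apply_of_mem p x.2]
    exact hN _ (hp x)
  | add x y hx hy => simpa using add_mem hx hy

theorem diagonalPart_apply_eq_self (hN : SetLike.IsHomogeneous ℳ N) (hp : ∀ n ∈ N, p n = n)
    {n : M} (hn : n ∈ N) :
    diagonalPart ℳ p n = n := by
  classical
  conv_lhs => rw [← sum_support_decompose ℳ n]
  rw [map_sum]
  refine (Finset.sum_congr rfl fun i _ => ?_).trans (sum_support_decompose ℳ n)
  rw [diagonalPart_apply_of_mem p (decompose ℳ n i).2, hp _ (hN i hn), decompose_coe, of_eq_same]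

end DirectSum

theorem AddSubgroup.isCompl_ker_of_proj {M : Type*} [AddCommGroup M] {N : AddSubgroup M}
    {q : M →+ M} (hmem : ∀ m, q m ∈ N) (hid : ∀ n ∈ N, q n = n) : IsCompl N q.ker :=
  AddSubgroup.toIntSubmodule.isCompl_iff.2
    (LinearMap.IsProj.isCompl (f := q.toIntLinearMap) ⟨hmem, hid⟩)

theorem NUModule.exists_proj_smul_of_isCompl {R M : Type*} [NonUnitalRing R] [AddCommGroup M]
    [SMul R M] (hM : NUModule R M) {N C : AddSubgroup M} (hNC : IsCompl N C)
    (hN : ∀ r : R, ∀ m ∈ N, r • m ∈ N) (hC : ∀ r : R, ∀ m ∈ C, r • m ∈ C) :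
    ∃ p : M →+ M,
      (∀ m, p m ∈ N) ∧ (∀ n ∈ N, p n = n) ∧ ∀ (r : R) (m : M), p (r • m) = r • p m := by
  have h := AddSubgroup.toIntSubmodule.isCompl_iff.1 hNC
  set P := Submodule.projection _ _ h
  refine ⟨P.toAddMonoidHom, Submodule.projection_apply_mem h,
    fun n hn => Submodule.projection_apply_of_mem_left h hn, fun r m => ?_⟩
  have hsplit : r • m = r • P m + r • (m - P m) := by rw [← hM.smul_add, add_sub_cancel]
  rw [LinearMap.toAddMonoidHom_coe, hsplit, map_add,
    Submodule.projection_apply_of_mem_left h (hN r _ (Submodule.projection_apply_mem h m)),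
    (Submodule.projection_apply_eq_zero_iff h).2 (hC r _ (Submodule.sub_projection_mem h m)),
    add_zero]

theorem GArrow.comp_left_cancel {G : Type*} [Groupoid G] {ρ σ σ' : GArrow G}
    {h : GArrow.Composable ρ σ} {h' : GArrow.Composable ρ σ'}
    (he : GArrow.comp ρ σ h = GArrow.comp ρ σ' h') : σ = σ' := by
  obtain ⟨c, d, g⟩ := ρ
  obtain ⟨a, b, f⟩ := σ
  obtain ⟨a', b', f'⟩ := σ'
  obtain rfl : c = b := h
  obtain rfl : c = b' := h'
  simp only [GArrow.comp, eqToHom_refl, Category.id_comp, Sigma.mk.injEq] at he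
  obtain ⟨rfl, he⟩ := he
  simp only [heq_eq_eq, Sigma.mk.injEq, true_and, cancel_mono] at he
  rw [he]

namespace GrModule

variable {G R M : Type*} [Groupoid G] [NonUnitalRing R] [AddCommGroup M] [SMul R M]
  {gr : OUGrading G R}

protected theorem smul_zero (gm : GrModule gr M) (r : R) : r • (0 : M) = 0 := by
  simpa using gm.smul_add r 0 0

protected theorem zero_smul (gm : GrModule gr M) (m : M) : (0 : R) • m = 0 := by
  simpa using gm.add_smul 0 0 m

variable (gm : GrModule gr M)

theorem isInternal [DecidableEq (GArrow G)] : IsInternal gm.component :=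
  isInternal_addSubgroup_of_iSupIndep_of_iSup_eq_top _ gm.indep gm.sup_eq_top

noncomputable instance [DecidableEq (GArrow G)] : Decomposition gm.component :=
  gm.isInternal.chooseDecomposition

variable [DecidableEq (GArrow G)]

theorem decompose_smul_of_mem {ρ σ : GArrow G} (hρσ : GArrow.Composable ρ σ) {r : R}
    (hr : r ∈ gr.component ρ) (m : M) :
    (decompose gm.component (r • m) (GArrow.comp ρ σ hρσ) : M) =
      r • decompose gm.component m σ := by
  induction m using Decomposition.inductionOn gm.component with
  | zero => simp [gm.smul_zero]
  | @homogeneous τ x =>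
    obtain ⟨x, hx⟩ := x
    by_cases hρτ : GArrow.Composable ρ τ
    · have hrx := gm.smul_mem ρ τ hρτ r hr x hx
      obtain rfl | hτσ := eq_or_ne τ σ
      · rw [decompose_of_mem_same _ hrx, decompose_of_mem_same _ hx]
      · rw [decompose_of_mem_ne _ hrx fun h => hτσ (GArrow.comp_left_cancel h),
          decompose_of_mem_ne _ hx hτσ, gm.smul_zero]
    · have hτσ : τ ≠ σ := fun h => hρτ (h ▸ hρσ)
      rw [gm.smul_eq_zero ρ τ hρτ r hr x hx, decompose_of_mem_ne _ hx hτσ, gm.smul_zero]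
      simp
  | add x y hx hy =>
    simp only [gm.smul_add, decompose_add, DirectSum.add_apply, AddSubgroup.coe_add, hx, hy]

variable {gm} {p : M →+ M}

theorem diagonalPart_smul_of_mem (hp : ∀ (r : R) (m : M), p (r • m) = r • p m) {ρ σ : GArrow G}
    {r : R} (hr : r ∈ gr.component ρ) {x : M} (hx : x ∈ gm.component σ) :
    diagonalPart gm.component p (r • x) = r • diagonalPart gm.component p x := by
  by_cases hρσ : GArrow.Composable ρ σ
  · rw [diagonalPart_apply_of_mem p (gm.smul_mem ρ σ hρσ r hr x hx), hp,
      gm.decompose_smul_of_mem hρσ hr, diagonalPart_apply_of_mem p hx]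
  · rw [gm.smul_eq_zero ρ σ hρσ r hr x hx,
      gm.smul_eq_zero ρ σ hρσ r hr _ (diagonalPart_mem p hx), map_zero]

theorem diagonalPart_smul (hp : ∀ (r : R) (m : M), p (r • m) = r • p m) (r : R) (m : M) :
    diagonalPart gm.component p (r • m) = r • diagonalPart gm.component p m := by
  induction m using Decomposition.inductionOn gm.component with
  | zero => rw [gm.smul_zero, map_zero, gm.smul_zero]
  | @homogeneous σ x =>
    have hr : r ∈ ⨆ ρ, gr.component ρ := gr.sup_eq_top ▸ AddSubgroup.mem_top r
    refine AddSubgroup.iSup_induction _ hr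
      (C := fun r => diagonalPart gm.component p (r • x) = r • diagonalPart gm.component p x)
      (fun ρ s hs => diagonalPart_smul_of_mem hp hs x.2) ?_ fun s t hs ht => ?_
    · rw [gm.zero_smul, map_zero, gm.zero_smul]
    · rw [gm.add_smul, map_add, hs, ht, gm.add_smul]
  | add x y hx hy => rw [gm.smul_add, map_add, hx, hy, map_add, gm.smul_add]

theorem isGrHom_diagonalPart (hp : ∀ (r : R) (m : M), p (r • m) = r • p m) :
    IsGrHom (R := R) gm.component gm.component (diagonalPart gm.component p) :=
  ⟨map_add _, diagonalPart_smul hp, fun _ _ => diagonalPart_mem p⟩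

end GrModule

theorem IsGrHom.isGrSubmodule_ker {G R M M' : Type*} [Groupoid G] [NonUnitalRing R]
    [AddCommGroup M] [SMul R M] [AddCommGroup M'] [SMul R M'] {gr : OUGrading G R}
    {gm : GrModule gr M} {gm' : GrModule gr M'} {f : M →+ M'}
    (hf : IsGrHom (R := R) gm.component gm'.component f) : IsGrSubmodule gm f.ker := by
  classical
  refine ⟨fun r m hm => ?_, (isHomogeneous_iff_eq_iSup_inf _ _).1 fun σ m hm => ?_⟩
  · rw [AddMonoidHom.mem_ker, hf.2.1, hm, gm'.smul_zero]
  · rw [AddMonoidHom.mem_ker, ← coe_decompose_map gm.component gm'.component hf.2.2, hm]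
    simp

theorem stmt13_general {G R M : Type*} [Groupoid G] [NonUnitalRing R] [AddCommGroup M] [SMul R M]
    (gr : OUGrading G R) (gm : GrModule gr M)
    (N : AddSubgroup M) (hN : IsGrSubmodule gm N) :
    (∃ C : AddSubgroup M, IsGrSubmodule gm C ∧ N ⊓ C = ⊥ ∧ N ⊔ C = ⊤) ↔
      (∃ C : AddSubgroup M, (∀ (r : R), ∀ m ∈ C, r • m ∈ C) ∧ N ⊓ C = ⊥ ∧ N ⊔ C = ⊤) := by
  classical
  refine ⟨fun ⟨C, hC, hNC⟩ => ⟨C, hC.1, hNC⟩, ?_⟩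
  rintro ⟨C, hC, hNC, hNCtop⟩
  obtain ⟨p, hpN, hpid, hpsmul⟩ := NUModule.exists_proj_smul_of_isCompl
    ⟨gm.smul_add, gm.add_smul, gm.mul_smul⟩ ⟨disjoint_iff.2 hNC, codisjoint_iff.2 hNCtop⟩ hN.1 hC
  have hNhom := (isHomogeneous_iff_eq_iSup_inf gm.component N).2 hN.2
  have hcompl := AddSubgroup.isCompl_ker_of_proj (diagonalPart_mem_of_forall_mem hNhom hpN)
    fun _ => diagonalPart_apply_eq_self hNhom hpid
  exact ⟨_, (GrModule.isGrHom_diagonalPart hpsmul).isGrSubmodule_ker, hcompl.inf_eq_bot,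
    hcompl.sup_eq_top⟩

/-- A graded submodule `N` of a graded unital module `M` is a direct
summand with a graded complement iff `U(N)` is a direct summand of `U(M)` as ungraded
`R`-modules. -/
theorem stmt13 {G R M : Type*} [Groupoid G] [NonUnitalRing R] [AddCommGroup M] [SMul R M]
    (gr : OUGrading G R) (gm : GrModule gr M) (hu : gm.IsUnital)
    (N : AddSubgroup M) (hN : IsGrSubmodule gm N) :
    (∃ C : AddSubgroup M, IsGrSubmodule gm C ∧ N ⊓ C = ⊥ ∧ N ⊔ C = ⊤) ↔
      (∃ C : AddSubgroup M, (∀ (r : R), ∀ m ∈ C, r • m ∈ C) ∧ N ⊓ C = ⊥ ∧ N ⊔ C = ⊤) :=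
  stmt13_general gr gm N hN
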